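/- Let n be a positive integer and let T = ℝⁿ/ℤⁿ be the torus, with quotient map π : ℝⁿ → T. For every finite family S₁, …, S_k of polyhedral subsets of T, the intersection S₁ ∩ ⋯ ∩ S_k is a polyhedral subset of T. -/

import Mathlib

/-!
By induction it suffices to intersect two polyhedral sets `π A` and `π B`, with `A`, `B` finite
unions of polytopes. Then `π A ∩ π B = π (⋃ v, A ∩ (v + B))`, where `v` runs over the lattice
points of `A - B`; these are finitely many because `A - B` is bounded. So everything reduces to:
the intersection of two polytopes is a polytope. Now `P ∩ Q` is the first projection of
`(P × Q) ∩ diagonal`, and the diagonal is cut out by finitely many hyperplanes. Finally, if a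
convex combination `x = ∑ w y • y` of a finite set `s` lies on the hyperplane `f = c`, pairing
each point `a` of `s` below the level with each `b` above it writes `x` as a convex combination
of the points where the segments `[a, b]` cross the hyperplane. The empty intersection is the
whole torus, the image of the unit cube.
-/

open Set Pointwise

/-- The integer lattice ℤⁿ as an additive subgroup of ℝⁿ. -/
def intLattice (n : ℕ) : AddSubgroup (Fin n → ℝ) where
  carrier := {x | ∀ i, ∃ m : ℤ, x i = (m : ℝ)}
  zero_mem' := fun i => ⟨0, by simp⟩
  add_mem' := by
    intro x y hx hy i
    obtain ⟨a, ha⟩ := hx i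
    obtain ⟨b, hb⟩ := hy i
    exact ⟨a + b, by simp [Pi.add_apply, ha, hb]⟩
  neg_mem' := by
    intro x hx i
    obtain ⟨a, ha⟩ := hx i
    exact ⟨-a, by simp [Pi.neg_apply, ha]⟩

/-- The torus T = ℝⁿ/ℤⁿ, with the quotient topology. -/
abbrev Torus (n : ℕ) := (Fin n → ℝ) ⧸ intLattice n

/-- The quotient map π : ℝⁿ → T. -/
def torusPi (n : ℕ) : (Fin n → ℝ) → Torus n := QuotientAddGroup.mk' (intLattice n)

/-- A polytope in ℝⁿ is the convex hull of a finite set of points. -/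
def IsPolytope {n : ℕ} (P : Set (Fin n → ℝ)) : Prop :=
  ∃ s : Finset (Fin n → ℝ), P = convexHull ℝ (s : Set (Fin n → ℝ))

/-- A finite union of polytopes in ℝⁿ. -/
def IsFinUnionOfPolytopes {n : ℕ} (A : Set (Fin n → ℝ)) : Prop :=
  ∃ (k : ℕ) (P : Fin k → Set (Fin n → ℝ)), (∀ i, IsPolytope (P i)) ∧ A = ⋃ i, P i

/-- A subset of the torus is polyhedral if it is the image under π of a
finite union of polytopes in ℝⁿ. -/
def IsPolyhedral {n : ℕ} (S : Set (Torus n)) : Prop :=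
  ∃ A : Set (Fin n → ℝ), IsFinUnionOfPolytopes A ∧ S = torusPi n '' A

section LevelCrossing

variable {E : Type*} [AddCommGroup E] [Module ℝ E] (f : E →ₗ[ℝ] ℝ) (c : ℝ)

/-- The point where the line through `a` and `b` meets the level set `f = c`. When
`f a = f b` the parameter is a division by zero, so the value is `a`. -/
noncomputable def levelCrossing (a b : E) : E :=
  AffineMap.lineMap a b ((c - f a) / (f b - f a))

def levelCrossings (s : Set E) : Set E :=
  (fun p : E × E => levelCrossing f c p.1 p.2) '' {p ∈ s ×ˢ s | f p.1 ≤ c ∧ c ≤ f p.2}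

variable {f c}

@[simp]
lemma levelCrossing_self (a : E) : levelCrossing f c a a = a := by
  simp [levelCrossing]

lemma smul_levelCrossing {a b : E} (h : f a ≠ f b) :
    (f b - f a) • levelCrossing f c a b = (f b - c) • a + (c - f a) • b := by
  have h' : f b - f a ≠ 0 := sub_ne_zero.2 h.symm
  rw [levelCrossing, AffineMap.lineMap_apply_module, smul_add, smul_smul, smul_smul,
    mul_div_cancel₀ _ h', mul_sub, mul_div_cancel₀ _ h', mul_one]
  congr 1
  ring_nf

lemma levelCrossing_mem_convexHull_inter {s : Set E} {a b : E} (ha : a ∈ s) (hb : b ∈ s)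
    (hac : f a ≤ c) (hcb : c ≤ f b) :
    levelCrossing f c a b ∈ convexHull ℝ s ∩ {x | f x = c} := by
  rcases hac.trans hcb |>.eq_or_lt with hab | hab
  · simpa [levelCrossing, hab, ← le_antisymm hac (hab ▸ hcb)] using subset_convexHull ℝ s ha
  have hpos : 0 < f b - f a := sub_pos.2 hab
  refine ⟨segment_subset_convexHull ha hb (lineMap_mem_segment ℝ a b ⟨?_, ?_⟩), ?_⟩
  · exact div_nonneg (sub_nonneg.2 hac) hpos.le
  · exact div_le_one_of_le₀ (by linarith) hpos.le
  · change f (AffineMap.lineMap a b _) = c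
    rw [AffineMap.lineMap_apply_module, map_add, map_smul, map_smul, smul_eq_mul, smul_eq_mul]
    field_simp
    ring

lemma Set.Finite.levelCrossings {s : Set E} (hs : s.Finite) : (levelCrossings f c s).Finite :=
  ((hs.prod hs).subset (Set.sep_subset _ _)).image _

lemma sum_smul_levelCrossing {P N : Finset E} (hP : ∀ a ∈ P, f a ≤ c) (hN : ∀ b ∈ N, c < f b)
    (w : E → ℝ) :
    ∑ p ∈ P ×ˢ N, (w p.1 * w p.2 * (f p.2 - f p.1)) • levelCrossing f c p.1 p.2 =
      (∑ b ∈ N, w b * (f b - c)) • ∑ a ∈ P, w a • a +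
        (∑ a ∈ P, w a * (c - f a)) • ∑ b ∈ N, w b • b := by
  have hterm : ∀ a ∈ P, ∀ b ∈ N,
      (w a * w b * (f b - f a)) • levelCrossing f c a b =
        (w b * (f b - c)) • w a • a + (w a * (c - f a)) • w b • b := by
    intro a ha b hb
    rw [mul_smul, smul_levelCrossing ((hP a ha).trans_lt (hN b hb)).ne, smul_add, smul_smul,
      smul_smul, smul_smul, smul_smul]
    congr 1 <;> ring_nf
  rw [Finset.sum_product, Finset.sum_congr rfl fun a ha => Finset.sum_congr rfl (hterm a ha)]
  simp only [Finset.sum_add_distrib, Finset.sum_smul, Finset.smul_sum]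
  congr 1
  exact Finset.sum_comm

lemma sum_levelCrossing_weights (P N : Finset E) (w : E → ℝ) :
    ∑ p ∈ P ×ˢ N, w p.1 * w p.2 * (f p.2 - f p.1) =
      (∑ b ∈ N, w b * (f b - c)) * ∑ a ∈ P, w a + (∑ a ∈ P, w a * (c - f a)) * ∑ b ∈ N, w b := by
  simp only [Finset.sum_product, Finset.sum_mul, Finset.mul_sum]
  rw [Finset.sum_comm (s := N), ← Finset.sum_add_distrib]
  refine Finset.sum_congr rfl fun a _ => ?_
  rw [← Finset.sum_add_distrib]
  exact Finset.sum_congr rfl fun b _ => by ring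

lemma Finset.sum_smul_mem_convexHull_of_ne_zero {ι : Type*} {s : Finset ι} {w : ι → ℝ}
    {z : ι → E} {t : Set E} (hw0 : ∀ i ∈ s, 0 ≤ w i) (hw1 : ∑ i ∈ s, w i = 1)
    (hz : ∀ i ∈ s, w i ≠ 0 → z i ∈ t) : ∑ i ∈ s, w i • z i ∈ convexHull ℝ t := by
  classical
  rw [← Finset.centerMass_eq_of_sum_1 _ _ hw1, ← Finset.centerMass_filter_ne_zero]
  refine Finset.centerMass_mem_convexHull _ (fun i hi => hw0 i (Finset.mem_filter.1 hi).1)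
    (by rw [Finset.sum_filter_ne_zero, hw1]; exact one_pos) fun i hi => ?_
  exact hz i (Finset.mem_filter.1 hi).1 (Finset.mem_filter.1 hi).2

lemma sum_filter_le_eq_sum_filter_gt {s : Finset E} {w : E → ℝ} (hw1 : ∑ y ∈ s, w y = 1)
    (hfx : f (∑ y ∈ s, w y • y) = c) :
    ∑ a ∈ s with f a ≤ c, w a * (c - f a) = ∑ b ∈ s with ¬f b ≤ c, w b * (f b - c) := by
  have hzero : ∑ y ∈ s, w y * (f y - c) = 0 := by
    simp only [mul_sub, Finset.sum_sub_distrib, ← Finset.sum_mul, hw1, one_mul, ← hfx,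
      map_sum, map_smul, smul_eq_mul, sub_self]
  rw [← Finset.sum_filter_add_sum_filter_not s (f · ≤ c), ← neg_eq_iff_add_eq_zero] at hzero
  rw [← hzero, ← Finset.sum_neg_distrib]
  exact Finset.sum_congr rfl fun a _ => by ring

lemma sum_smul_mem_convexHull_levelCrossings_of_pos {s : Finset E} {w : E → ℝ}
    (hw0 : ∀ y ∈ s, 0 ≤ w y) (hw1 : ∑ y ∈ s, w y = 1) (hfx : f (∑ y ∈ s, w y • y) = c)
    (hM : 0 < ∑ b ∈ s with ¬f b ≤ c, w b * (f b - c)) :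
    ∑ y ∈ s, w y • y ∈ convexHull ℝ (levelCrossings f c s) := by
  have hP : ∀ a ∈ s.filter (f · ≤ c), a ∈ s ∧ f a ≤ c := fun a => Finset.mem_filter.1
  have hN : ∀ b ∈ s.filter (¬f · ≤ c), b ∈ s ∧ c < f b := fun b hb =>
    (Finset.mem_filter.1 hb).imp_right not_le.1
  have hbalance := sum_filter_le_eq_sum_filter_gt hw1 hfx
  have hweights := sum_levelCrossing_weights (f := f) (c := c)
    (s.filter (f · ≤ c)) (s.filter (¬f · ≤ c)) w
  have hpoints := sum_smul_levelCrossing (fun a ha => (hP a ha).2) (fun b ha => (hN b ha).2) w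
  rw [hbalance, ← mul_add, Finset.sum_filter_add_sum_filter_not, hw1, mul_one] at hweights
  rw [hbalance, ← smul_add, Finset.sum_filter_add_sum_filter_not] at hpoints
  -- With `M` the weighted mass above the level, `M • ∑ w y • y` is the sum over the pairs
  -- `(a, b)` (below, above) of `(w a * w b * (f b - f a)) • levelCrossing f c a b`,
  -- and these weights add up to `M`.
  have hmem := Finset.centerMass_mem_convexHull (s.filter (f · ≤ c) ×ˢ s.filter (¬f · ≤ c))
    (s := levelCrossings f c s) (z := fun p => levelCrossing f c p.1 p.2)
    (w := fun p => w p.1 * w p.2 * (f p.2 - f p.1))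
    (fun p hp => by
      obtain ⟨⟨ha, hac⟩, ⟨hb, hcb⟩⟩ := And.imp (hP _) (hN _) (Finset.mem_product.1 hp)
      exact mul_nonneg (mul_nonneg (hw0 _ ha) (hw0 _ hb)) (by linarith))
    (hweights ▸ hM)
    (fun p hp => by
      obtain ⟨⟨ha, hac⟩, ⟨hb, hcb⟩⟩ := And.imp (hP _) (hN _) (Finset.mem_product.1 hp)
      exact ⟨p, ⟨⟨ha, hb⟩, hac, hcb.le⟩, rfl⟩)
  rwa [Finset.centerMass, hweights, hpoints, inv_smul_smul₀ hM.ne'] at hmem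

lemma sum_smul_mem_convexHull_levelCrossings_of_eq_zero {s : Finset E} {w : E → ℝ}
    (hw0 : ∀ y ∈ s, 0 ≤ w y) (hw1 : ∑ y ∈ s, w y = 1) (hfx : f (∑ y ∈ s, w y • y) = c)
    (hM : ∑ b ∈ s with ¬f b ≤ c, w b * (f b - c) = 0) :
    ∑ y ∈ s, w y • y ∈ convexHull ℝ (levelCrossings f c s) := by
  have hbelow := (Finset.sum_eq_zero_iff_of_nonneg fun a ha =>
    mul_nonneg (hw0 a (Finset.mem_filter.1 ha).1) (sub_nonneg.2 (Finset.mem_filter.1 ha).2)).1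
      ((sum_filter_le_eq_sum_filter_gt hw1 hfx).trans hM)
  have habove := (Finset.sum_eq_zero_iff_of_nonneg fun b hb =>
    mul_nonneg (hw0 b (Finset.mem_filter.1 hb).1)
      (sub_nonneg.2 (not_le.1 (Finset.mem_filter.1 hb).2).le)).1 hM
  refine Finset.sum_smul_mem_convexHull_of_ne_zero hw0 hw1 fun y hy hwy => ?_
  have hfy : f y = c := by
    by_cases h : f y ≤ c
    · linarith [(mul_eq_zero.1 (hbelow y (Finset.mem_filter.2 ⟨hy, h⟩))).resolve_left hwy]
    · linarith [(mul_eq_zero.1 (habove y (Finset.mem_filter.2 ⟨hy, h⟩))).resolve_left hwy]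
  exact ⟨(y, y), ⟨⟨hy, hy⟩, hfy.le, hfy.ge⟩, levelCrossing_self y⟩

lemma mem_convexHull_levelCrossings {s : Finset E} {x : E} (hx : x ∈ convexHull ℝ (s : Set E))
    (hfx : f x = c) : x ∈ convexHull ℝ (levelCrossings f c s) := by
  obtain ⟨w, hw0, hw1, rfl⟩ := Finset.mem_convexHull'.1 hx
  have hM : 0 ≤ ∑ b ∈ s with ¬f b ≤ c, w b * (f b - c) := Finset.sum_nonneg fun b hb =>
    mul_nonneg (hw0 b (Finset.mem_filter.1 hb).1)
      (sub_nonneg.2 (not_le.1 (Finset.mem_filter.1 hb).2).le)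
  rcases hM.eq_or_lt with hM | hM
  · exact sum_smul_mem_convexHull_levelCrossings_of_eq_zero hw0 hw1 hfx hM.symm
  · exact sum_smul_mem_convexHull_levelCrossings_of_pos hw0 hw1 hfx hM

theorem convexHull_inter_levelSet (s : Finset E) :
    convexHull ℝ (s : Set E) ∩ {x | f x = c} = convexHull ℝ (levelCrossings f c s) := by
  refine subset_antisymm (fun x hx => mem_convexHull_levelCrossings hx.1 hx.2) ?_
  refine convexHull_min ?_ ((convex_convexHull ℝ _).inter (convex_hyperplane f.isLinear c))
  rintro _ ⟨p, ⟨⟨ha, hb⟩, hac, hcb⟩, rfl⟩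
  exact levelCrossing_mem_convexHull_inter ha hb hac hcb

theorem exists_finset_convexHull_inter_levelSet (s : Finset E) (f : E →ₗ[ℝ] ℝ) (c : ℝ) :
    ∃ u : Finset E, convexHull ℝ (s : Set E) ∩ {x | f x = c} = convexHull ℝ (u : Set E) :=
  ⟨s.finite_toSet.levelCrossings.toFinset, by
    rw [Set.Finite.coe_toFinset, convexHull_inter_levelSet]⟩

theorem exists_finset_convexHull_inter_biInter_levelSet {ι : Type*} (I : Finset ι)
    (f : ι → E →ₗ[ℝ] ℝ) (c : ι → ℝ) (s : Finset E) :
    ∃ u : Finset E,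
      convexHull ℝ (s : Set E) ∩ ⋂ i ∈ I, {x | f i x = c i} = convexHull ℝ (u : Set E) := by
  classical
  induction I using Finset.induction_on generalizing s with
  | empty => exact ⟨s, by simp⟩
  | insert j I _ ih =>
    obtain ⟨t, ht⟩ := exists_finset_convexHull_inter_levelSet s (f j) (c j)
    obtain ⟨u, hu⟩ := ih t
    exact ⟨u, by rw [Finset.set_biInter_insert, ← Set.inter_assoc, ht, hu]⟩

theorem exists_finset_convexHull_inter_preimage {F : Type*} [AddCommGroup F] [Module ℝ F]
    [FiniteDimensional ℝ F] (s : Finset E) (g : E →ₗ[ℝ] F) (y : F) :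
    ∃ u : Finset E, convexHull ℝ (s : Set E) ∩ g ⁻¹' {y} = convexHull ℝ (u : Set E) := by
  let b := Module.finBasis ℝ F
  obtain ⟨u, hu⟩ := exists_finset_convexHull_inter_biInter_levelSet Finset.univ
    (fun i => (b.coord i).comp g) (fun i => b.coord i y) s
  refine ⟨u, Eq.trans ?_ hu⟩
  congr 1
  ext x
  simp [b.ext_elem_iff]

theorem exists_finset_convexHull_inter_convexHull [FiniteDimensional ℝ E] (s t : Finset E) :
    ∃ u : Finset E,
      convexHull ℝ (s : Set E) ∩ convexHull ℝ (t : Set E) = convexHull ℝ (u : Set E) := by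
  classical
  obtain ⟨u, hu⟩ := exists_finset_convexHull_inter_preimage (s ×ˢ t)
    (LinearMap.fst ℝ E E - LinearMap.snd ℝ E E) 0
  refine ⟨u.image Prod.fst, ?_⟩
  have hfst : Prod.fst '' convexHull ℝ (u : Set (E × E)) =
      convexHull ℝ (Prod.fst '' (u : Set (E × E))) :=
    (LinearMap.fst ℝ E E).image_convexHull _
  rw [Finset.coe_image, ← hfst, ← hu, Finset.coe_product, convexHull_prod]
  ext x
  constructor
  · exact fun hx => ⟨(x, x), ⟨hx, by simp⟩, rfl⟩
  · rintro ⟨⟨a, b⟩, ⟨⟨ha, hb⟩, hab⟩, rfl⟩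
    obtain rfl : a = b := by simpa [sub_eq_zero] using hab
    exact ⟨ha, hb⟩

end LevelCrossing

section Torus
variable {n : ℕ}

lemma IsPolytope.inter {P Q : Set (Fin n → ℝ)} (hP : IsPolytope P) (hQ : IsPolytope Q) :
    IsPolytope (P ∩ Q) := by
  obtain ⟨s, rfl⟩ := hP
  obtain ⟨t, rfl⟩ := hQ
  exact exists_finset_convexHull_inter_convexHull s t

lemma IsPolytope.vadd {P : Set (Fin n → ℝ)} (hP : IsPolytope P) (v : Fin n → ℝ) :
    IsPolytope (v +ᵥ P) := by
  classical
  obtain ⟨s, rfl⟩ := hP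
  exact ⟨v +ᵥ s, by rw [Finset.coe_vadd_finset, convexHull_vadd]⟩

lemma IsPolytope.isBounded {P : Set (Fin n → ℝ)} (hP : IsPolytope P) : Bornology.IsBounded P := by
  obtain ⟨s, rfl⟩ := hP
  exact isBounded_convexHull.2 s.finite_toSet.isBounded

lemma IsPolytope.isFinUnionOfPolytopes {P : Set (Fin n → ℝ)} (hP : IsPolytope P) :
    IsFinUnionOfPolytopes P :=
  ⟨1, fun _ => P, fun _ => hP, (Set.iUnion_const P).symm⟩

lemma IsFinUnionOfPolytopes.iUnion {ι : Type*} [Finite ι] {A : ι → Set (Fin n → ℝ)}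
    (hA : ∀ i, IsFinUnionOfPolytopes (A i)) : IsFinUnionOfPolytopes (⋃ i, A i) := by
  choose k P hP hAP using hA
  obtain ⟨m, ⟨e⟩⟩ := Finite.exists_equiv_fin (Σ i, Fin (k i))
  refine ⟨m, fun j => P (e.symm j).1 (e.symm j).2, fun j => hP _ _, ?_⟩
  rw [Set.iUnion_congr hAP, Set.iUnion_sigma', e.symm.surjective.iUnion_comp (fun p => P p.1 p.2)]

lemma IsFinUnionOfPolytopes.inter {A B : Set (Fin n → ℝ)} (hA : IsFinUnionOfPolytopes A)
    (hB : IsFinUnionOfPolytopes B) : IsFinUnionOfPolytopes (A ∩ B) := by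
  obtain ⟨k, P, hP, rfl⟩ := hA
  obtain ⟨l, Q, hQ, rfl⟩ := hB
  rw [Set.iUnion_inter_iUnion]
  exact .iUnion fun i => .iUnion fun j => ((hP i).inter (hQ j)).isFinUnionOfPolytopes

lemma IsFinUnionOfPolytopes.vadd {A : Set (Fin n → ℝ)} (hA : IsFinUnionOfPolytopes A)
    (v : Fin n → ℝ) : IsFinUnionOfPolytopes (v +ᵥ A) := by
  obtain ⟨k, P, hP, rfl⟩ := hA
  exact ⟨k, fun i => v +ᵥ P i, fun i => (hP i).vadd v, Set.vadd_set_iUnion v P⟩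

lemma IsFinUnionOfPolytopes.isBounded {A : Set (Fin n → ℝ)} (hA : IsFinUnionOfPolytopes A) :
    Bornology.IsBounded A := by
  obtain ⟨k, P, hP, rfl⟩ := hA
  exact Bornology.isBounded_iUnion.2 fun i => (hP i).isBounded

lemma coe_intLattice :
    (intLattice n : Set (Fin n → ℝ)) = Submodule.span ℤ (Set.range (Pi.basisFun ℝ (Fin n))) := by
  ext x
  rw [SetLike.mem_coe, SetLike.mem_coe, Module.Basis.mem_span_iff_repr_mem]
  simp [intLattice, eq_comm]

lemma finite_intLattice_inter {C : Set (Fin n → ℝ)} (hC : Bornology.IsBounded C) :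
    ((intLattice n : Set (Fin n → ℝ)) ∩ C).Finite := by
  rw [Set.inter_comm, coe_intLattice]
  exact ZSpan.setFinite_inter _ hC

lemma image_torusPi_inter_image_torusPi (A B : Set (Fin n → ℝ)) :
    torusPi n '' A ∩ torusPi n '' B =
      torusPi n '' ⋃ v ∈ (intLattice n : Set (Fin n → ℝ)) ∩ (A - B), A ∩ (v +ᵥ B) := by
  ext q
  simp only [Set.mem_inter_iff, Set.mem_image, Set.mem_iUnion, exists_prop, Set.mem_sub,
    Set.mem_vadd_set, vadd_eq_add, SetLike.mem_coe]
  constructor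
  · rintro ⟨⟨a, ha, rfl⟩, b, hb, hba⟩
    obtain ⟨v, hv, rfl⟩ := (QuotientAddGroup.mk'_eq_mk' _).1 hba
    exact ⟨b + v, ⟨v, ⟨hv, b + v, ha, b, hb, add_sub_cancel_left b v⟩, ha, b, hb, add_comm v b⟩,
      rfl⟩
  · rintro ⟨a, ⟨v, ⟨hv, -⟩, ha, b, hb, rfl⟩, rfl⟩
    exact ⟨⟨v + b, ha, rfl⟩, b, hb, (QuotientAddGroup.mk'_eq_mk' _).2 ⟨v, hv, add_comm b v⟩⟩

lemma IsPolyhedral.inter {S T : Set (Torus n)} (hS : IsPolyhedral S) (hT : IsPolyhedral T) :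
    IsPolyhedral (S ∩ T) := by
  obtain ⟨A, hA, rfl⟩ := hS
  obtain ⟨B, hB, rfl⟩ := hT
  refine ⟨_, ?_, image_torusPi_inter_image_torusPi A B⟩
  have := (finite_intLattice_inter (isBounded_sub hA.isBounded hB.isBounded)).to_subtype
  rw [Set.biUnion_eq_iUnion]
  exact .iUnion fun v => hA.inter (hB.vadd v)

lemma isPolytope_Icc_zero_one : IsPolytope (Set.Icc (0 : Fin n → ℝ) 1) := by
  classical
  refine ⟨Fintype.piFinset fun _ => {0, 1}, ?_⟩
  rw [Fintype.coe_piFinset, convexHull_pi, ← Set.pi_univ_Icc]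
  simp [convexHull_pair, segment_eq_Icc]

lemma image_torusPi_Icc_zero_one : torusPi n '' Set.Icc 0 1 = Set.univ := by
  refine Set.eq_univ_of_forall fun q => ?_
  obtain ⟨y, rfl⟩ := QuotientAddGroup.mk'_surjective (intLattice n) q
  refine ⟨fun i => Int.fract (y i), ⟨fun i => Int.fract_nonneg _,
    fun i => (Int.fract_lt_one _).le⟩, ?_⟩
  exact (QuotientAddGroup.mk'_eq_mk' _).2 ⟨fun i => ⌊y i⌋, fun i => ⟨⌊y i⌋, rfl⟩,
    funext fun i => Int.fract_add_floor (y i)⟩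

lemma isPolyhedral_univ : IsPolyhedral (Set.univ : Set (Torus n)) :=
  ⟨_, isPolytope_Icc_zero_one.isFinUnionOfPolytopes, image_torusPi_Icc_zero_one.symm⟩

lemma IsPolyhedral.biInter {ι : Type*} {S : ι → Set (Torus n)} (I : Finset ι)
    (hS : ∀ i ∈ I, IsPolyhedral (S i)) : IsPolyhedral (⋂ i ∈ I, S i) := by
  classical
  induction I using Finset.induction_on with
  | empty => simpa using isPolyhedral_univ
  | insert j I _ ih =>
    rw [Finset.set_biInter_insert]
    exact (hS j (I.mem_insert_self j)).inter (ih fun i hi => hS i (Finset.mem_insert_of_mem hi))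

end Torus

theorem isPolyhedral_iInter_general (n : ℕ) (k : ℕ)
    (S : Fin k → Set (Torus n)) (hS : ∀ i, IsPolyhedral (S i)) :
    IsPolyhedral (⋂ i, S i) := by
  simpa using IsPolyhedral.biInter Finset.univ fun i _ => hS i

/-- The intersection of any finite family of polyhedral subsets of the torus
T = ℝⁿ/ℤⁿ is polyhedral. -/
theorem isPolyhedral_iInter (n : ℕ) (hn : 0 < n) (k : ℕ)
    (S : Fin k → Set (Torus n)) (hS : ∀ i, IsPolyhedral (S i)) :
    IsPolyhedral (⋂ i, S i) :=
  isPolyhedral_iInter_general n k S hS
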